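/- arXiv:1602.08542 — 2 statements merged into one kernel-verified Lean document; each statement's English description precedes it below -/
import Mathlib

section
/- Let S, c, C₁, C₂, P₀, K₁ ∈ ℝ and let Z : ℝ → ℝ be three times continuously differentiable with 0 < Z(r) < 1 for all r. Set α₀ = S·C₁², α₁ = C₂² − α₀, and suppose that Φ₁(r) = K₁ for all r, where Φ₁ = −(1/(2Z²(1−Z)²))·[2Z(1−Z)(α₁Z + α₀)Z″ + (α₀(1−2Z) − α₁Z²)(3 − (Z′)²) + 6(1−S)Z³(1−Z)²]. Define Ẑ(t,x) = Z(x−ct), v̂₁(t,x) = c + C₁/Z(x−ct), v̂₂(t,x) = c + C₂/(1−Z(x−ct)), and P̂(t,x) = P(x−ct) with P = P₀ + Z − (C₁²/(6Z²))(2ZZ″ − (Z′)² + 3). Then (Ẑ, v̂₁, v̂₂, P̂) solves the dimensionless Choi–Camassa system with parameter S at every point (t,x) ∈ ℝ². -/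
noncomputable def pdt (f : ℝ × ℝ → ℝ) (p : ℝ × ℝ) : ℝ := deriv (fun s => f (s, p.2)) p.1

/-- Partial derivative in the second (space) variable. -/
noncomputable def pdx (f : ℝ × ℝ → ℝ) (p : ℝ × ℝ) : ℝ := deriv (fun y => f (p.1, y)) p.2

/-- G_i = ∂ₜ∂ₓv + v ∂ₓ²v − (∂ₓv)². -/
noncomputable def Gpd (v : ℝ × ℝ → ℝ) (p : ℝ × ℝ) : ℝ :=
  pdt (pdx v) p + v p * pdx (pdx v) p - (pdx v p) ^ 2

/-- The dimensionless Choi–Camassa system with density-ratio parameter `S`. -/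
def CCsystem (S : ℝ) (Z v₁ v₂ P : ℝ × ℝ → ℝ) : Prop :=
  (∀ p : ℝ × ℝ, pdt Z p + pdx (fun q => Z q * v₁ q) p = 0) ∧
  (∀ p : ℝ × ℝ, pdt Z p + pdx (fun q => Z q * v₂ q) p - pdx v₂ p = 0) ∧
  (∀ p : ℝ × ℝ, pdt v₁ p + v₁ p * pdx v₁ p - pdx Z p + pdx P p
      - Z p * pdx Z p * Gpd v₁ p - (1/3) * (Z p) ^ 2 * pdx (Gpd v₁) p = 0) ∧
  (∀ p : ℝ × ℝ, pdt v₂ p + v₂ p * pdx v₂ p - pdx Z p + S * pdx P p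
      - (1/3) * (1 - Z p) ^ 2 * pdx (Gpd v₂) p + (1 - Z p) * pdx Z p * Gpd v₂ p = 0)

/-- The first integral Φ₁. -/
noncomputable def Phi1f (S α₀ α₁ : ℝ) (Z : ℝ → ℝ) : ℝ → ℝ := fun r =>
  -(1 / (2 * (Z r) ^ 2 * (1 - Z r) ^ 2)) *
    (2 * Z r * (1 - Z r) * (α₁ * Z r + α₀) * deriv (deriv Z) r
      + (α₀ * (1 - 2 * Z r) - α₁ * (Z r) ^ 2) * (3 - (deriv Z r) ^ 2)
      + 6 * (1 - S) * (Z r) ^ 3 * (1 - Z r) ^ 2)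

/-- Pressure integral P = P₀ + Z − (C₁²/(6Z²))(2ZZ″ − (Z′)² + 3). -/
noncomputable def Pf (P₀ C₁ : ℝ) (Z : ℝ → ℝ) : ℝ → ℝ := fun r =>
  P₀ + Z r - (C₁ ^ 2 / (6 * (Z r) ^ 2)) *
    (2 * Z r * deriv (deriv Z) r - (deriv Z r) ^ 2 + 3)

/-!
Along a traveling wave `f (x - c t)` every time derivative is `-c` times the space derivative, so
the system collapses to four ODEs in `r = x - c t`. With the velocities `c + Cᵢ / hᵢ`
(`h₁ = Z`, `h₂ = 1 - Z`) the relative layer fluxes `hᵢ (vᵢ - c) = Cᵢ` are constant, which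
settles both mass equations. The pressure `P` is built so that the upper momentum equation holds
identically, and the lower momentum equation then equals `Φ₁' / 3`, which vanishes because `Φ₁`
is constant.
-/

noncomputable def travelingWave (c : ℝ) (f : ℝ → ℝ) : ℝ × ℝ → ℝ := fun p => f (p.2 - c * p.1)

noncomputable def reducedG (u : ℝ → ℝ) (r : ℝ) : ℝ := u r * deriv (deriv u) r - deriv u r ^ 2

section TravelingWave

variable (c : ℝ)

theorem pdx_travelingWave (f : ℝ → ℝ) : pdx (travelingWave c f) = travelingWave c (deriv f) := by
  funext p
  exact deriv_comp_sub_const f (c * p.1) p.2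

theorem pdt_travelingWave (f : ℝ → ℝ) :
    pdt (travelingWave c f) = travelingWave c (fun r => -c * deriv f r) := by
  funext p
  simp only [pdt, travelingWave]
  rw [deriv_comp_mul_left c (fun y => f (p.2 - y)) p.1, deriv_comp_const_sub, smul_eq_mul,
    neg_mul, mul_neg]

theorem Gpd_travelingWave (u : ℝ → ℝ) :
    Gpd (travelingWave c fun r => c + u r) = travelingWave c (reducedG u) := by
  funext p
  simp only [Gpd, pdx_travelingWave, pdt_travelingWave, deriv_const_add']
  simp only [travelingWave, reducedG]
  ring

theorem CCsystem_travelingWave (S : ℝ) (Z u₁ u₂ P : ℝ → ℝ)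
    (h₁ : ∀ r, deriv (fun r => Z r * (c + u₁ r)) r = c * deriv Z r)
    (h₂ : ∀ r, deriv (fun r => Z r * (c + u₂ r)) r - deriv u₂ r = c * deriv Z r)
    (h₃ : ∀ r, u₁ r * deriv u₁ r - deriv Z r + deriv P r - Z r * deriv Z r * reducedG u₁ r
      - 1 / 3 * Z r ^ 2 * deriv (reducedG u₁) r = 0)
    (h₄ : ∀ r, u₂ r * deriv u₂ r - deriv Z r + S * deriv P r
      - 1 / 3 * (1 - Z r) ^ 2 * deriv (reducedG u₂) r + (1 - Z r) * deriv Z r * reducedG u₂ r = 0) :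
    CCsystem S (travelingWave c Z) (travelingWave c fun r => c + u₁ r)
      (travelingWave c fun r => c + u₂ r) (travelingWave c P) := by
  refine ⟨fun p => ?_, fun p => ?_, fun p => ?_, fun p => ?_⟩
  · change pdt (travelingWave c Z) p + pdx (travelingWave c fun r => Z r * (c + u₁ r)) p = 0
    simp only [pdt_travelingWave, pdx_travelingWave]
    simp only [travelingWave]
    linear_combination h₁ (p.2 - c * p.1)
  · change pdt (travelingWave c Z) p + pdx (travelingWave c fun r => Z r * (c + u₂ r)) p
      - pdx (travelingWave c fun r => c + u₂ r) p = 0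
    simp only [pdt_travelingWave, pdx_travelingWave, deriv_const_add']
    simp only [travelingWave]
    linear_combination h₂ (p.2 - c * p.1)
  · simp only [Gpd_travelingWave, pdt_travelingWave, pdx_travelingWave, deriv_const_add']
    simp only [travelingWave]
    linear_combination h₃ (p.2 - c * p.1)
  · simp only [Gpd_travelingWave, pdt_travelingWave, pdx_travelingWave, deriv_const_add']
    simp only [travelingWave]
    linear_combination h₄ (p.2 - c * p.1)

end TravelingWave

theorem differentiable_derivs_of_contDiff_three {h : ℝ → ℝ} (hh : ContDiff ℝ 3 h) :
    Differentiable ℝ h ∧ Differentiable ℝ (deriv h) ∧ Differentiable ℝ (deriv (deriv h)) :=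
  ⟨hh.differentiable (by norm_num), (hh.of_le (by norm_num)).differentiable_deriv_two, by fun_prop⟩

theorem deriv_one_sub (f : ℝ → ℝ) : deriv (fun r => 1 - f r) = fun r => -deriv f r :=
  funext fun _ => deriv_const_sub 1

section Reciprocal

variable {h : ℝ → ℝ} (C : ℝ)

theorem reducedG_const_div (hh : ContDiff ℝ 2 h) (h0 : ∀ r, h r ≠ 0) :
    reducedG (fun r => C / h r)
      = fun r => C ^ 2 * (deriv h r ^ 2 - h r * deriv (deriv h) r) / h r ^ 4 := by
  have hd : Differentiable ℝ h := hh.differentiable (by norm_num)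
  have hd' : Differentiable ℝ (deriv h) := hh.differentiable_deriv_two
  have h1 : deriv (fun r => C / h r) = fun r => -C * deriv h r / h r ^ 2 :=
    funext fun r => deriv_const_div C (hd r) (h0 r)
  have h2 : deriv (fun r => -C * deriv h r / h r ^ 2)
      = fun r => C * (2 * deriv h r ^ 2 - h r * deriv (deriv h) r) / h r ^ 3 := by
    refine deriv_eq fun r => (((hd' r).hasDerivAt.const_mul (-C)).div
      ((hd r).hasDerivAt.pow 2) (pow_ne_zero 2 (h0 r))).congr_deriv ?_
    simp only [Pi.pow_apply]
    field_simp [h0 r]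
    ring
  funext r
  simp only [reducedG, h1, h2]
  field_simp [h0 r]
  ring

theorem hasDerivAt_reducedG_const_div (hh : ContDiff ℝ 3 h) (h0 : ∀ r, h r ≠ 0) (r : ℝ) :
    HasDerivAt (reducedG fun r => C / h r)
      (C ^ 2 * (h r * (deriv h r * deriv (deriv h) r - h r * deriv (deriv (deriv h)) r)
        - 4 * deriv h r * (deriv h r ^ 2 - h r * deriv (deriv h) r)) / h r ^ 5) r := by
  obtain ⟨hd, hd', hd''⟩ := differentiable_derivs_of_contDiff_three hh
  rw [reducedG_const_div C (hh.of_le (by norm_num)) h0]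
  refine ((((hd' r).hasDerivAt.pow 2).sub ((hd r).hasDerivAt.mul (hd'' r).hasDerivAt)).const_mul
    (C ^ 2)).div ((hd r).hasDerivAt.pow 4) (pow_ne_zero 4 (h0 r)) |>.congr_deriv ?_
  simp only [Pi.pow_apply, Pi.mul_apply, Pi.sub_apply]
  field_simp [h0 r]
  ring

end Reciprocal

section Reduced

variable {Z : ℝ → ℝ}

theorem reduced_upper_mass (c C : ℝ) (hZ0 : ∀ r, Z r ≠ 0) (r : ℝ) :
    deriv (fun r => Z r * (c + C / Z r)) r = c * deriv Z r := by
  have hflux : (fun r => Z r * (c + C / Z r)) = fun r => c * Z r + C := by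
    funext r
    field_simp [hZ0 r]
  rw [hflux, deriv_add_const, deriv_const_mul_field']

theorem reduced_lower_mass (c C : ℝ) (hZ : Differentiable ℝ Z) (hZ1 : ∀ r, Z r ≠ 1) (r : ℝ) :
    deriv (fun r => Z r * (c + C / (1 - Z r))) r - deriv (fun r => C / (1 - Z r)) r
      = c * deriv Z r := by
  have hW0 : ∀ r, 1 - Z r ≠ 0 := fun r => sub_ne_zero.2 (hZ1 r).symm
  have hflux : (fun r => Z r * (c + C / (1 - Z r))) = fun r => (c * Z r - C) + C / (1 - Z r) := by
    funext r
    field_simp [hW0 r]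
    ring
  have hd : DifferentiableAt ℝ (fun r => C / (1 - Z r)) r :=
    (differentiableAt_const C).div ((differentiableAt_const 1).sub (hZ r)) (hW0 r)
  rw [hflux, deriv_fun_add ((hZ r).const_mul c |>.sub_const C) hd, deriv_sub_const,
    deriv_const_mul_field']
  ring

theorem hasDerivAt_Pf (P₀ C₁ : ℝ) (hZ : ContDiff ℝ 3 Z) (hZ0 : ∀ r, Z r ≠ 0) (r : ℝ) :
    HasDerivAt (Pf P₀ C₁ Z)
      (deriv Z r - C₁ ^ 2 * (Z r ^ 2 * deriv (deriv (deriv Z)) r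
        - deriv Z r * (2 * Z r * deriv (deriv Z) r - deriv Z r ^ 2 + 3)) / (3 * Z r ^ 3)) r := by
  obtain ⟨hd, hd', hd''⟩ := differentiable_derivs_of_contDiff_three hZ
  refine (((hd r).hasDerivAt.const_add P₀).sub (((hasDerivAt_const r (C₁ ^ 2)).div
    (((hd r).hasDerivAt.pow 2).const_mul 6) (by simp [hZ0 r])).mul
    (((((hd r).hasDerivAt.const_mul 2).mul (hd'' r).hasDerivAt).sub
      ((hd' r).hasDerivAt.pow 2)).add_const 3))).congr_deriv ?_
  simp only [Pi.div_apply, Pi.mul_apply, Pi.sub_apply, Pi.pow_apply]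
  field_simp [hZ0 r]
  ring

theorem reduced_upper_momentum (P₀ C₁ : ℝ) (hZ : ContDiff ℝ 3 Z) (hZ0 : ∀ r, Z r ≠ 0) (r : ℝ) :
    C₁ / Z r * deriv (fun r => C₁ / Z r) r - deriv Z r + deriv (Pf P₀ C₁ Z) r
      - Z r * deriv Z r * reducedG (fun r => C₁ / Z r) r
      - 1 / 3 * Z r ^ 2 * deriv (reducedG fun r => C₁ / Z r) r = 0 := by
  rw [(hasDerivAt_reducedG_const_div C₁ hZ hZ0 r).deriv, (hasDerivAt_Pf P₀ C₁ hZ hZ0 r).deriv,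
    deriv_const_div C₁ (hZ.differentiable (by norm_num) r) (hZ0 r),
    reducedG_const_div C₁ (hZ.of_le (by norm_num)) hZ0]
  field_simp [hZ0 r]
  ring

theorem reduced_lower_momentum_eq_deriv_Phi1f (S P₀ C₁ C₂ : ℝ) (hZ : ContDiff ℝ 3 Z)
    (hZ0 : ∀ r, Z r ≠ 0) (hZ1 : ∀ r, Z r ≠ 1) (r : ℝ) :
    C₂ / (1 - Z r) * deriv (fun r => C₂ / (1 - Z r)) r - deriv Z r + S * deriv (Pf P₀ C₁ Z) r
      - 1 / 3 * (1 - Z r) ^ 2 * deriv (reducedG fun r => C₂ / (1 - Z r)) r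
      + (1 - Z r) * deriv Z r * reducedG (fun r => C₂ / (1 - Z r)) r
      = deriv (Phi1f S (S * C₁ ^ 2) (C₂ ^ 2 - S * C₁ ^ 2) Z) r / 3 := by
  obtain ⟨hd, hd', hd''⟩ := differentiable_derivs_of_contDiff_three hZ
  have hW : ContDiff ℝ 3 (fun r => 1 - Z r) := contDiff_const.sub hZ
  have hW0 : ∀ r, 1 - Z r ≠ 0 := fun r => sub_ne_zero.2 (hZ1 r).symm
  have hZr := (hd r).hasDerivAt
  have hT₁ := (((hZr.const_mul 2).mul (hZr.const_sub 1)).mul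
    ((hZr.const_mul (C₂ ^ 2 - S * C₁ ^ 2)).add_const (S * C₁ ^ 2))).mul (hd'' r).hasDerivAt
  have hT₂ := ((((hZr.const_mul 2).const_sub 1).const_mul (S * C₁ ^ 2)).sub
    ((hZr.pow 2).const_mul (C₂ ^ 2 - S * C₁ ^ 2))).mul (((hd' r).hasDerivAt.pow 2).const_sub 3)
  have hT₃ := ((hZr.pow 3).const_mul (6 * (1 - S))).mul ((hZr.const_sub 1).pow 2)
  have hΦ₁ : HasDerivAt (Phi1f S (S * C₁ ^ 2) (C₂ ^ 2 - S * C₁ ^ 2) Z) _ r :=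
    ((hasDerivAt_const r (1 : ℝ)).div (((hZr.pow 2).const_mul 2).mul ((hZr.const_sub 1).pow 2))
      (by simp [hZ0 r, hW0 r])).neg.mul ((hT₁.add hT₂).add hT₃)
  rw [(hasDerivAt_reducedG_const_div C₂ hW hW0 r).deriv, (hasDerivAt_Pf P₀ C₁ hZ hZ0 r).deriv,
    deriv_const_div C₂ (hW.differentiable (by norm_num) r) (hW0 r),
    reducedG_const_div C₂ (hW.of_le (by norm_num)) hW0, hΦ₁.deriv]
  simp only [deriv_one_sub, deriv.fun_neg', Pi.div_apply, Pi.mul_apply, Pi.sub_apply, Pi.pow_apply,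
    Pi.neg_apply]
  field_simp [hZ0 r, hW0 r]
  ring

end Reduced

theorem stmt9 (S c C₁ C₂ P₀ K₁ : ℝ) (Z : ℝ → ℝ)
    (hZ : ContDiff ℝ 3 Z)
    (hrange : ∀ r : ℝ, 0 < Z r ∧ Z r < 1)
    (hΦ₁ : ∀ r : ℝ, Phi1f S (S * C₁ ^ 2) (C₂ ^ 2 - S * C₁ ^ 2) Z r = K₁) :
    CCsystem S
      (fun p => Z (p.2 - c * p.1))
      (fun p => c + C₁ / Z (p.2 - c * p.1))
      (fun p => c + C₂ / (1 - Z (p.2 - c * p.1)))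
      (fun p => Pf P₀ C₁ Z (p.2 - c * p.1)) := by
  have hZ0 : ∀ r, Z r ≠ 0 := fun r => (hrange r).1.ne'
  have hZ1 : ∀ r, Z r ≠ 1 := fun r => (hrange r).2.ne
  have hΦ₁' : ∀ r, deriv (Phi1f S (S * C₁ ^ 2) (C₂ ^ 2 - S * C₁ ^ 2) Z) r = 0 := by
    simp [funext hΦ₁]
  exact CCsystem_travelingWave c S Z (fun r => C₁ / Z r) (fun r => C₂ / (1 - Z r)) (Pf P₀ C₁ Z)
    (reduced_upper_mass c C₁ hZ0) (reduced_lower_mass c C₂ (hZ.differentiable (by norm_num)) hZ1)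
    (reduced_upper_momentum P₀ C₁ hZ hZ0)
    fun r => by
      rw [reduced_lower_momentum_eq_deriv_Phi1f S P₀ C₁ C₂ hZ hZ0 hZ1 r, hΦ₁' r, zero_div]
end

section
/- Let S ∈ (0,1) and A₄ = 3(1−S). Let B₁, B₂ ∈ ℝ with B₁ ≠ 0, B₂² − 2B₁B₂ − 1 = 0 and |B₂| > 1, and let γ ∈ ℝ satisfy γ² = 3/B₁². Set α₀ = A₄B₁²(2B₂ − B₁)/(12(6B₁²B₂ + 3B₁ + 2B₂)). Then 6B₁²B₂ + 3B₁ + 2B₂ ≠ 0, α₀ = A₄B₁²/(12B₂²), and the function Z(r) = B₁/(tanh(γr) + B₂) satisfies, for all r ∈ ℝ: α₀·(Z′(r))² = A₄Z(r)⁴ + A₃Z(r)³ + A₂Z(r)² + A₁Z(r) + A₀, where A₃ = −2A₄, A₂ = A₄(B₁ + B₂)/B₂, A₁ = −A₄B₁/B₂, and A₀ = 3α₀; in particular A₁ + A₂ + A₃ + A₄ = 0. -/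
/-
With `t = tanh (γ r)` we have `t' = γ (1 - t²)`, so the Möbius image `Z = B₁ / (t + B₂)` again
solves a Riccati equation; under `B₂² - 2 B₁ B₂ = 1` it reads `Z' = γ (2 B₂ Z² - 2 B₂ Z + B₁)`.
Squaring it and using `γ² B₁² = 3` gives `α₀ Z'² = A₄ (Z² - Z + B₁ / (2 B₂))²`, and expanding the
square yields exactly the coefficients `A₄, …, A₀`.
-/

/-- The kink-type profile Z(r) = B₁/(tanh(γr) + B₂). -/
noncomputable def Ztanh (B₁ B₂ γ : ℝ) : ℝ → ℝ := fun r => B₁ / (Real.tanh (γ * r) + B₂)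

open Real

theorem Real.hasDerivAt_tanh (x : ℝ) : HasDerivAt tanh (1 - tanh x ^ 2) x := by
  have htanh : tanh = sinh / cosh := funext tanh_eq_sinh_div_cosh
  refine htanh ▸ ((hasDerivAt_sinh x).div (hasDerivAt_cosh x) (cosh_pos x).ne').congr_deriv ?_
  simp only [Pi.div_apply]
  field_simp

theorem tanh_add_ne_zero {B : ℝ} (hB : 1 ≤ |B|) (x : ℝ) : tanh x + B ≠ 0 := by
  intro h
  have := abs_tanh_lt_one x
  rw [eq_neg_of_add_eq_zero_left h, abs_neg] at this
  linarith

section Ztanh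

variable {B₁ B₂ γ r : ℝ}

theorem hasDerivAt_Ztanh (hden : tanh (γ * r) + B₂ ≠ 0) :
    HasDerivAt (Ztanh B₁ B₂ γ) (-(B₁ * γ * (1 - tanh (γ * r) ^ 2)) / (tanh (γ * r) + B₂) ^ 2) r := by
  have hlin : HasDerivAt (fun x => γ * x) γ r := by
    simpa using (hasDerivAt_id r).const_mul γ
  have hden' := ((hasDerivAt_tanh (γ * r)).comp r hlin).add_const B₂
  refine ((hasDerivAt_const r B₁).fun_div hden' hden).congr_deriv ?_
  simp only [Function.comp_apply]
  ring

theorem hasDerivAt_Ztanh_riccati (hB : B₂ ^ 2 - 2 * B₁ * B₂ - 1 = 0)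
    (hden : tanh (γ * r) + B₂ ≠ 0) :
    HasDerivAt (Ztanh B₁ B₂ γ)
      (γ * (2 * B₂ * Ztanh B₁ B₂ γ r ^ 2 - 2 * B₂ * Ztanh B₁ B₂ γ r + B₁)) r := by
  convert hasDerivAt_Ztanh hden using 1
  simp only [Ztanh]
  field_simp
  linear_combination (-(B₁ * γ)) * hB

end Ztanh

theorem denom_ne_zero_of_sq_sub_eq_zero {B₁ B₂ : ℝ} (hB : B₂ ^ 2 - 2 * B₁ * B₂ - 1 = 0) :
    6 * B₁ ^ 2 * B₂ + 3 * B₁ + 2 * B₂ ≠ 0 := by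
  have hkey : 2 * B₂ * (6 * B₁ ^ 2 * B₂ + 3 * B₁ + 2 * B₂) = B₂ ^ 2 * (3 * B₂ ^ 2 + 1) := by
    linear_combination (-3 * (B₂ ^ 2 + 2 * B₁ * B₂)) * hB
  have hB₂ : B₂ ≠ 0 := by rintro rfl; norm_num at hB
  intro h
  rw [h, mul_zero] at hkey
  have : 0 < B₂ ^ 2 * (3 * B₂ ^ 2 + 1) := by positivity
  linarith

theorem stmt14_general (A₄ B₁ B₂ γ α₀ A₃ A₂ A₁ A₀ : ℝ)
    (hB₁ : B₁ ≠ 0) (hB₂ : B₂ ^ 2 - 2 * B₁ * B₂ - 1 = 0) (habs : 1 < |B₂|)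
    (hγ : γ ^ 2 = 3 / B₁ ^ 2)
    (hα₀ : α₀ = A₄ * B₁ ^ 2 * (2 * B₂ - B₁) / (12 * (6 * B₁ ^ 2 * B₂ + 3 * B₁ + 2 * B₂)))
    (hA₃ : A₃ = -2 * A₄) (hA₂ : A₂ = A₄ * (B₁ + B₂) / B₂)
    (hA₁ : A₁ = -A₄ * B₁ / B₂) (hA₀ : A₀ = 3 * α₀) :
    (6 * B₁ ^ 2 * B₂ + 3 * B₁ + 2 * B₂ ≠ 0) ∧
    (α₀ = A₄ * B₁ ^ 2 / (12 * B₂ ^ 2)) ∧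
    (∀ r : ℝ, α₀ * (deriv (Ztanh B₁ B₂ γ) r) ^ 2
      = A₄ * (Ztanh B₁ B₂ γ r) ^ 4 + A₃ * (Ztanh B₁ B₂ γ r) ^ 3
        + A₂ * (Ztanh B₁ B₂ γ r) ^ 2 + A₁ * Ztanh B₁ B₂ γ r + A₀) ∧
    (A₁ + A₂ + A₃ + A₄ = 0) := by
  have hB₂0 : B₂ ≠ 0 := by rintro rfl; norm_num at hB₂
  have hD := denom_ne_zero_of_sq_sub_eq_zero hB₂
  have hα₀' : α₀ = A₄ * B₁ ^ 2 / (12 * B₂ ^ 2) := by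
    rw [hα₀, div_eq_div_iff (by positivity) (by positivity)]
    linear_combination (12 * A₄ * B₁ ^ 2 * (2 * B₂ + 3 * B₁)) * hB₂
  refine ⟨hD, hα₀', fun r => ?_, ?_⟩
  · rw [(hasDerivAt_Ztanh_riccati hB₂ (tanh_add_ne_zero habs.le _)).deriv, mul_pow, hγ,
      hA₀, hA₁, hA₂, hA₃, hα₀']
    field_simp
    ring
  · rw [hA₁, hA₂, hA₃]
    field_simp
    ring

theorem stmt14 (S A₄ B₁ B₂ γ α₀ A₃ A₂ A₁ A₀ : ℝ)
    (hS : 0 < S) (hS1 : S < 1) (hA₄ : A₄ = 3 * (1 - S))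
    (hB₁ : B₁ ≠ 0) (hB₂ : B₂ ^ 2 - 2 * B₁ * B₂ - 1 = 0) (habs : 1 < |B₂|)
    (hγ : γ ^ 2 = 3 / B₁ ^ 2)
    (hα₀ : α₀ = A₄ * B₁ ^ 2 * (2 * B₂ - B₁) / (12 * (6 * B₁ ^ 2 * B₂ + 3 * B₁ + 2 * B₂)))
    (hA₃ : A₃ = -2 * A₄) (hA₂ : A₂ = A₄ * (B₁ + B₂) / B₂)
    (hA₁ : A₁ = -A₄ * B₁ / B₂) (hA₀ : A₀ = 3 * α₀) :
    (6 * B₁ ^ 2 * B₂ + 3 * B₁ + 2 * B₂ ≠ 0) ∧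
    (α₀ = A₄ * B₁ ^ 2 / (12 * B₂ ^ 2)) ∧
    (∀ r : ℝ, α₀ * (deriv (Ztanh B₁ B₂ γ) r) ^ 2
      = A₄ * (Ztanh B₁ B₂ γ r) ^ 4 + A₃ * (Ztanh B₁ B₂ γ r) ^ 3
        + A₂ * (Ztanh B₁ B₂ γ r) ^ 2 + A₁ * Ztanh B₁ B₂ γ r + A₀) ∧
    (A₁ + A₂ + A₃ + A₄ = 0) :=
  stmt14_general A₄ B₁ B₂ γ α₀ A₃ A₂ A₁ A₀ hB₁ hB₂ habs hγ hα₀ hA₃ hA₂ hA₁ hA₀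
end
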